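/- For any rooted binary phylogenetic tree T on a taxon set X evolving under the symmetric 4-state model N_4 (not necessarily ultrametric), P_{αβγ}(X) ≥ P_{βγδ}(X), i.e. P(MP(f,T) = {α,β,γ} | ρ = α) ≥ P(MP(f,T) = {β,γ,δ} | ρ = α). -/

import Mathlib

/-- A rooted binary phylogenetic tree: a `leaf` is a single taxon, and the
root of `node p₁ p₂ L R` has the roots of `L` and `R` as its two children,
attached by edges carrying one-specific-change probabilities `p₁` and `p₂`. -/
inductive PhyloTree : Type
  | leaf : PhyloTree
  | node (p₁ p₂ : ℝ) (L R : PhyloTree) : PhyloTree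

namespace PhyloTree

/-- The number of leaves (taxa) of the tree. -/
def nLeaves : PhyloTree → ℕ
  | leaf => 1
  | node _ _ L R => nLeaves L + nLeaves R

/-- All edge substitution probabilities of the tree lie in `[0, 1/4]`. -/
def valid : PhyloTree → Prop
  | leaf => True
  | node p₁ p₂ L R => 0 ≤ p₁ ∧ p₁ ≤ 1/4 ∧ 0 ≤ p₂ ∧ p₂ ≤ 1/4 ∧ valid L ∧ valid R

end PhyloTree

/-- Transition probabilities of the symmetric 4-state model `N₄`: conditional
on the upper endpoint of an edge with substitution probability `q` being in
state `a`, the lower endpoint is in each specific state `b ≠ a` with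
probability `q`, and in state `a` with probability `1 - 3q`. -/
noncomputable def trans4 (q : ℝ) (a b : Fin 4) : ℝ := if a = b then 1 - 3*q else q

/-- `charProb4 t a f` is the probability, conditional on the root of `t`
being in state `a`, that the leaves of `t` (read from left to right) are in
the states recorded by the list `f`.  States evolve independently along the
edges according to `trans4`. -/
noncomputable def charProb4 : PhyloTree → Fin 4 → List (Fin 4) → ℝ
  | .leaf, a, f => if f = [a] then 1 else 0
  | .node p₁ p₂ L R, a, f =>
      ∑ b : Fin 4, ∑ c : Fin 4, trans4 p₁ a b * trans4 p₂ a c *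
        charProb4 L b (f.take L.nLeaves) * charProb4 R c (f.drop L.nLeaves)

/-- Fitch's parsimony operation: `A ∩ B` if it is nonempty, `A ∪ B` otherwise. -/
def fitchOp {k : ℕ} (A B : Finset (Fin k)) : Finset (Fin k) :=
  if (A ∩ B).Nonempty then A ∩ B else A ∪ B

/-- The set `MP(f,T)` assigned to the root of `t` by the Fitch algorithm when
the leaves carry the character (list of leaf states) `f`. -/
def fitchSet4 : PhyloTree → List (Fin 4) → Finset (Fin 4)
  | .leaf, [b] => {b}
  | .leaf, _ => ∅
  | .node _ _ L R, f =>
      fitchOp (fitchSet4 L (f.take L.nLeaves)) (fitchSet4 R (f.drop L.nLeaves))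

/-- `rootProb4 t a R = P(MP(f,T) = R ∣ root state = a)`. -/
noncomputable def rootProb4 (t : PhyloTree) (a : Fin 4) (R : Finset (Fin 4)) : ℝ :=
  ∑ f : Fin t.nLeaves → Fin 4,
    if fitchSet4 t (List.ofFn f) = R then charProb4 t a (List.ofFn f) else 0

/-- The reconstruction accuracy
`RA(X) = ∑_{R ⊆ A, α ∈ R} (1/|R|) · P(MP(f,T) = R ∣ ρ = α)`, with `α := 0`. -/
noncomputable def RA4 (t : PhyloTree) : ℝ :=
  ∑ R : Finset (Fin 4),
    if (0 : Fin 4) ∈ R then (R.card : ℝ)⁻¹ * rootProb4 t 0 R else 0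

/-- `ultra4 t p`: the tree `t` is ultrametric, and the probability of one
specific state change from the root to any leaf is `p` (under `N₄`, the
one-specific-change probabilities compose along a path as
`p₁ ∘ q₁ = p₁ + q₁ - 4·p₁·q₁`). -/
def ultra4 : PhyloTree → ℝ → Prop
  | .leaf, p => p = 0
  | .node p₁ p₂ L R, p => ∃ q₁ q₂, ultra4 L q₁ ∧ ultra4 R q₂ ∧
      p = p₁ + q₁ - 4*p₁*q₁ ∧ p = p₂ + q₂ - 4*p₂*q₂

/-!
Relabelling the states by a permutation `σ` commutes with the Fitch algorithm and with `N₄`, so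
`P(MP = σ R ∣ ρ = σ a) = P(MP = R ∣ ρ = a)`; the transposition `(α δ)` turns `P_{βγδ}(X)` into
`P(MP = {α,β,γ} ∣ ρ = δ)`. It therefore suffices that `P(MP = S ∣ ρ = b) ≤ P(MP = S ∣ ρ = a)`
whenever `a ∈ S` and `b ∉ S`, which goes by induction on the tree. If the subtrees have Fitch sets
`A`, `B` with `fitchOp A B = S`, then `b ∈ A → a ∈ A` and `b ∈ B → a ∈ B`, so (by induction, or
by symmetry when `a` and `b` are both in or both out) each subtree produces its set at least as
likely from `a` as from `b`. An edge with substitution probability `p` turns the distribution into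
`p · ∑_c P(· ∣ c) + (1 - 4p) · P(· ∣ a)`, which preserves these comparisons as `p ≤ 1/4`.
-/

open Finset

lemma trans4_nonneg {q : ℝ} (h₀ : 0 ≤ q) (h₁ : q ≤ 1/4) (a b : Fin 4) : 0 ≤ trans4 q a b := by
  unfold trans4; split <;> linarith

lemma trans4_perm (q : ℝ) (σ : Equiv.Perm (Fin 4)) (a b : Fin 4) :
    trans4 q (σ a) (σ b) = trans4 q a b := by
  simp [trans4]

lemma trans4_eq_add_ite (q : ℝ) (a b : Fin 4) :
    trans4 q a b = q + (1 - 4 * q) * if a = b then 1 else 0 := by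
  unfold trans4; split <;> ring

lemma charProb4_nonneg {t : PhyloTree} (hv : t.valid) (a : Fin 4) (f : List (Fin 4)) :
    0 ≤ charProb4 t a f := by
  induction t generalizing a f with
  | leaf => unfold charProb4; split <;> norm_num
  | node p₁ p₂ L R ihL ihR =>
    obtain ⟨h₁, h₂, h₃, h₄, hL, hR⟩ := hv
    refine sum_nonneg fun b _ => sum_nonneg fun c _ => ?_
    have := trans4_nonneg h₁ h₂ a b
    have := trans4_nonneg h₃ h₄ a c
    have := ihL hL b (f.take L.nLeaves)
    have := ihR hR c (f.drop L.nLeaves)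
    positivity

lemma rootProb4_nonneg {t : PhyloTree} (hv : t.valid) (a : Fin 4) (R : Finset (Fin 4)) :
    0 ≤ rootProb4 t a R :=
  sum_nonneg fun _ _ => by split <;> first | exact charProb4_nonneg hv a _ | rfl

lemma charProb4_map_perm (t : PhyloTree) (σ : Equiv.Perm (Fin 4)) (a : Fin 4)
    (f : List (Fin 4)) :
    charProb4 t (σ a) (f.map σ) = charProb4 t a f := by
  induction t generalizing a f with
  | leaf =>
    simp only [charProb4, ← List.map_singleton, (List.map_injective_iff.2 σ.injective).eq_iff]
  | node p₁ p₂ L R ihL ihR =>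
    simp only [charProb4, ← List.map_take, ← List.map_drop]
    rw [← Equiv.sum_comp σ]
    refine sum_congr rfl fun b _ => ?_
    rw [← Equiv.sum_comp σ]
    simp only [trans4_perm, ihL, ihR]

lemma fitchOp_image {k : ℕ} {f : Fin k → Fin k} (hf : Function.Injective f)
    (A B : Finset (Fin k)) : fitchOp (A.image f) (B.image f) = (fitchOp A B).image f := by
  unfold fitchOp
  simp only [← image_inter _ _ hf, image_nonempty, apply_ite (image f), image_union]

lemma mem_imp_of_mem_fitchOp_of_notMem {k : ℕ} {A B : Finset (Fin k)} {a b : Fin k}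
    (ha : a ∈ fitchOp A B) (hb : b ∉ fitchOp A B) : (b ∈ A → a ∈ A) ∧ (b ∈ B → a ∈ B) := by
  unfold fitchOp at ha hb
  split_ifs at ha hb <;> simp_all

lemma fitchSet4_map_perm (t : PhyloTree) (σ : Equiv.Perm (Fin 4)) (f : List (Fin 4)) :
    fitchSet4 t (f.map σ) = (fitchSet4 t f).image σ := by
  induction t generalizing f with
  | leaf =>
    match f with
    | [] | [_] | _ :: _ :: _ => simp [fitchSet4]
  | node p₁ p₂ L R ihL ihR =>
    simp only [fitchSet4, ← List.map_take, ← List.map_drop, ihL, ihR, fitchOp_image σ.injective]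

lemma rootProb4_perm (t : PhyloTree) (σ : Equiv.Perm (Fin 4)) (a : Fin 4)
    (R : Finset (Fin 4)) :
    rootProb4 t (σ a) (R.image σ) = rootProb4 t a R := by
  unfold rootProb4
  rw [← Equiv.sum_comp ((Equiv.refl _).arrowCongr σ)]
  refine sum_congr rfl fun f _ => ?_
  have hf : List.ofFn ((Equiv.refl _).arrowCongr σ f) = (List.ofFn f).map σ := by
    rw [List.map_ofFn]; rfl
  simp only [hf, fitchSet4_map_perm, charProb4_map_perm, (image_injective σ.injective).eq_iff]

lemma Finset.image_swap_of_mem_iff {α : Type*} [DecidableEq α] {s : Finset α} {a b : α}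
    (h : a ∈ s ↔ b ∈ s) : s.image (Equiv.swap a b) = s := by
  refine eq_of_subset_of_card_le (fun x hx => ?_)
    (card_image_of_injective _ (Equiv.injective _)).ge
  obtain ⟨y, hy, rfl⟩ := mem_image.1 hx
  rw [Equiv.swap_apply_def]
  split_ifs <;> simp_all

lemma rootProb4_eq_of_mem_iff (t : PhyloTree) {a b : Fin 4} {R : Finset (Fin 4)}
    (h : a ∈ R ↔ b ∈ R) : rootProb4 t a R = rootProb4 t b R := by
  simpa [Finset.image_swap_of_mem_iff h] using (rootProb4_perm t (Equiv.swap a b) a R).symm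

lemma rootProb4_leaf (a : Fin 4) (R : Finset (Fin 4)) :
    rootProb4 .leaf a R = if {a} = R then 1 else 0 := by
  change ∑ f : Fin 1 → Fin 4, _ = _
  rw [Fintype.sum_equiv (Equiv.funUnique (Fin 1) (Fin 4)) _
    (fun x => if x = a then if {a} = R then 1 else 0 else 0) fun f => ?_]
  · simp
  · change (if fitchSet4 .leaf [f 0] = R then charProb4 .leaf a [f 0] else 0) = _
    by_cases h : f 0 = a <;> simp [h, fitchSet4, charProb4]

-- `P(MP = A)` for `t` hanging below an edge of substitution probability `p` whose upper end is
-- in state `a`.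
noncomputable def edgeRootProb4 (p : ℝ) (t : PhyloTree) (a : Fin 4) (A : Finset (Fin 4)) : ℝ :=
  ∑ b : Fin 4, trans4 p a b * rootProb4 t b A

lemma edgeRootProb4_eq (p : ℝ) (t : PhyloTree) (a : Fin 4) (A : Finset (Fin 4)) :
    edgeRootProb4 p t a A = p * ∑ c, rootProb4 t c A + (1 - 4 * p) * rootProb4 t a A := by
  simp [edgeRootProb4, trans4_eq_add_ite, add_mul, sum_add_distrib, mul_sum]

lemma edgeRootProb4_nonneg {p : ℝ} (h₀ : 0 ≤ p) (h₁ : p ≤ 1/4) {t : PhyloTree} (hv : t.valid)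
    (a : Fin 4) (A : Finset (Fin 4)) : 0 ≤ edgeRootProb4 p t a A :=
  sum_nonneg fun b _ => mul_nonneg (trans4_nonneg h₀ h₁ a b) (rootProb4_nonneg hv b A)

lemma edgeRootProb4_le_edgeRootProb4 {p : ℝ} (hp : p ≤ 1/4) {t : PhyloTree} {a b : Fin 4}
    {A : Finset (Fin 4)} (h : rootProb4 t b A ≤ rootProb4 t a A) :
    edgeRootProb4 p t b A ≤ edgeRootProb4 p t a A := by
  rw [edgeRootProb4_eq, edgeRootProb4_eq]
  nlinarith

lemma edgeRootProb4_eq_sum (p : ℝ) (t : PhyloTree) (a : Fin 4) (A : Finset (Fin 4)) :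
    edgeRootProb4 p t a A = ∑ u : Fin t.nLeaves → Fin 4 with fitchSet4 t (List.ofFn u) = A,
      ∑ b, trans4 p a b * charProb4 t b (List.ofFn u) := by
  simp only [edgeRootProb4, rootProb4, ← sum_filter, mul_sum]
  exact sum_comm

section Fiber

variable {ι₁ ι₂ κ₁ κ₂ M : Type*} [Fintype ι₁] [Fintype ι₂] [Fintype κ₁] [Fintype κ₂]
  [DecidableEq κ₁] [DecidableEq κ₂]

lemma Fintype.sum_mul_sum_fiber [NonUnitalNonAssocSemiring M] (g : ι₁ → κ₁) (φ : κ₁ → M)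
    (w : ι₁ → M) : ∑ k, φ k * ∑ i with g i = k, w i = ∑ i, φ (g i) * w i := by
  simp_rw [mul_sum]
  rw [← Finset.sum_fiberwise univ g]
  exact Finset.sum_congr rfl fun k _ =>
    Finset.sum_congr rfl fun i hi => by rw [(mem_filter.1 hi).2]

lemma Fintype.sum_sum_mul_sum_fiber [CommSemiring M] (g₁ : ι₁ → κ₁) (g₂ : ι₂ → κ₂)
    (φ : κ₁ → κ₂ → M) (w₁ : ι₁ → M) (w₂ : ι₂ → M) :
    ∑ k₁, ∑ k₂, φ k₁ k₂ * ((∑ i with g₁ i = k₁, w₁ i) * ∑ j with g₂ j = k₂, w₂ j) =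
      ∑ i, ∑ j, φ (g₁ i) (g₂ j) * (w₁ i * w₂ j) := by
  simp_rw [mul_left_comm (φ _ _), ← mul_sum, sum_mul_sum_fiber g₂, mul_comm (∑ i ∈ _, w₁ i)]
  rw [sum_mul_sum_fiber g₁]
  refine Finset.sum_congr rfl fun i _ => ?_
  rw [sum_mul, mul_sum]
  exact Finset.sum_congr rfl fun j _ => by ring

end Fiber

lemma rootProb4_node_eq_sum_sum (p₁ p₂ : ℝ) (L R : PhyloTree) (a : Fin 4)
    (S : Finset (Fin 4)) :
    rootProb4 (.node p₁ p₂ L R) a S = ∑ u : Fin L.nLeaves → Fin 4, ∑ v : Fin R.nLeaves → Fin 4,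
      (if fitchOp (fitchSet4 L (List.ofFn u)) (fitchSet4 R (List.ofFn v)) = S then 1 else 0) *
        ((∑ b, trans4 p₁ a b * charProb4 L b (List.ofFn u)) *
          ∑ c, trans4 p₂ a c * charProb4 R c (List.ofFn v)) := by
  change ∑ f : Fin (L.nLeaves + R.nLeaves) → Fin 4, _ = _
  rw [← (Fin.appendEquiv _ _).sum_comp, Fintype.sum_prod_type]
  refine sum_congr rfl fun u _ => sum_congr rfl fun v _ => ?_
  -- the summand still reads the character's length as `(node p₁ p₂ L R).nLeaves`
  have happ : List.ofFn (n := (PhyloTree.node p₁ p₂ L R).nLeaves)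
      (Fin.appendEquiv _ _ (u, v)) = List.ofFn u ++ List.ofFn v :=
    List.ofFn_fin_append u v
  have htake : (List.ofFn u ++ List.ofFn v).take L.nLeaves = List.ofFn u := by simp
  have hdrop : (List.ofFn u ++ List.ofFn v).drop L.nLeaves = List.ofFn v := by simp
  simp only [happ, fitchSet4, charProb4, htake, hdrop, boole_mul, sum_mul_sum]
  congr! 3 with b _ c _
  ring

lemma rootProb4_node (p₁ p₂ : ℝ) (L R : PhyloTree) (a : Fin 4) (S : Finset (Fin 4)) :
    rootProb4 (.node p₁ p₂ L R) a S = ∑ A, ∑ B,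
      if fitchOp A B = S then edgeRootProb4 p₁ L a A * edgeRootProb4 p₂ R a B else 0 := by
  rw [rootProb4_node_eq_sum_sum,
    ← Fintype.sum_sum_mul_sum_fiber (fun u => fitchSet4 L (List.ofFn u))
      (fun v => fitchSet4 R (List.ofFn v)) (fun A B => if fitchOp A B = S then 1 else 0)]
  simp only [edgeRootProb4_eq_sum, boole_mul]

theorem rootProb4_le_of_mem_imp {t : PhyloTree} (hv : t.valid) {a b : Fin 4}
    {S : Finset (Fin 4)} (h : b ∈ S → a ∈ S) : rootProb4 t b S ≤ rootProb4 t a S := by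
  induction t generalizing S with
  | leaf =>
    rw [rootProb4_leaf, rootProb4_leaf]
    by_cases hb : {b} = S
    · obtain rfl : a = b := by simpa [← hb] using h
      rfl
    · rw [if_neg hb]; split <;> norm_num
  | node p₁ p₂ L R ihL ihR =>
    obtain ⟨h₁, h₂, h₃, h₄, hL, hR⟩ := hv
    by_cases hab : a ∈ S ↔ b ∈ S
    · exact (rootProb4_eq_of_mem_iff _ hab).ge
    have ha : a ∈ S := by tauto
    have hb : b ∉ S := by tauto
    rw [rootProb4_node, rootProb4_node]
    refine sum_le_sum fun A _ => sum_le_sum fun B _ => ?_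
    split_ifs with hS
    · subst hS
      obtain ⟨hA, hB⟩ := mem_imp_of_mem_fitchOp_of_notMem ha hb
      exact mul_le_mul (edgeRootProb4_le_edgeRootProb4 h₂ (ihL hL hA))
        (edgeRootProb4_le_edgeRootProb4 h₄ (ihR hR hB)) (edgeRootProb4_nonneg h₃ h₄ hR b B)
        (edgeRootProb4_nonneg h₁ h₂ hL a A)
    · rfl

theorem rootProb4_alphabetagamma_ge_betagammadelta_general (t : PhyloTree)
    (hv : t.valid) :
    rootProb4 t 0 {0, 1, 2} ≥ rootProb4 t 0 {1, 2, 3} := by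
  have hswap : ({0, 1, 2} : Finset (Fin 4)).image (Equiv.swap 0 3) = {1, 2, 3} := by decide
  calc rootProb4 t 0 {1, 2, 3} = rootProb4 t 3 {0, 1, 2} := by
        rw [← hswap, ← rootProb4_perm t (Equiv.swap 0 3) 3, Equiv.swap_apply_right]
    _ ≤ rootProb4 t 0 {0, 1, 2} := rootProb4_le_of_mem_imp hv (by decide)

/-- For any rooted binary phylogenetic tree under `N₄` (not
necessarily ultrametric), `P_{αβγ}(X) ≥ P_{βγδ}(X)`. -/
theorem rootProb4_alphabetagamma_ge_betagammadelta (t : PhyloTree)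
    (hn : 2 ≤ t.nLeaves) (hv : t.valid) :
    rootProb4 t 0 {0, 1, 2} ≥ rootProb4 t 0 {1, 2, 3} :=
  rootProb4_alphabetagamma_ge_betagammadelta_general t hv
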